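/- Let R be the 2×2 rotation matrix with rows (−1/2, √3/2) and (−√3/2, −1/2), and let τ = e^{2πi/3}. Let Ω ⊆ ℝ² be a measurable set with R·Ω = Ω and −Ω = Ω, and let Φ₁, Φ₂ : ℝ² → ℂ be measurable with ∫_Ω |Φ₁|⁴ < ∞ and ∫_Ω |Φ₂|⁴ < ∞, satisfying Φ₁(Rᵀx) = τ Φ₁(x), Φ₂(Rᵀx) = τ̄ Φ₂(x) and Φ₂(x) = conj(Φ₁(−x)) for almost every x ∈ ℝ². Set β₁ := ∫_Ω |Φ₁(x)|⁴ dx and β₂ := ∫_Ω |Φ₁(x)|² |Φ₂(x)|² dx. Then for all ψ₁, ψ₂ ∈ ℂ, writing U₀ := ψ₁Φ₁ + ψ₂Φ₂, one has ∫_Ω conj(Φ₁) |U₀|² U₀ dx = (β₁|ψ₁|² + 2β₂|ψ₂|²) ψ₁ and ∫_Ω conj(Φ₂) |U₀|² U₀ dx = (2β₂|ψ₁|² + β₁|ψ₂|²) ψ₂. -/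

import Mathlib

open MeasureTheory

/-- The map `x ↦ Rᵀx` on ℝ², where `R` is the rotation by `2π/3` with rows
`(−1/2, √3/2)` and `(−√3/2, −1/2)`; so `Rᵀ` has rows `(−1/2, −√3/2)`, `(√3/2, −1/2)`. -/
noncomputable def rotT (x : EuclideanSpace ℝ (Fin 2)) : EuclideanSpace ℝ (Fin 2) :=
  (WithLp.equiv 2 (Fin 2 → ℝ)).symm
    ![-(1 / 2) * x 0 - (Real.sqrt 3 / 2) * x 1, (Real.sqrt 3 / 2) * x 0 - (1 / 2) * x 1]

/-- The map `x ↦ Rx` on ℝ², where `R` has rows `(−1/2, √3/2)` and `(−√3/2, −1/2)`. -/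
noncomputable def rotR (x : EuclideanSpace ℝ (Fin 2)) : EuclideanSpace ℝ (Fin 2)  :=
  (WithLp.equiv 2 (Fin 2 → ℝ)).symm
    ![-(1 / 2) * x 0 + (Real.sqrt 3 / 2) * x 1, -(Real.sqrt 3 / 2) * x 0 - (1 / 2) * x 1]

/-!
Write `T x = Rᵀx`. Since `T` preserves Lebesgue measure and `Ω`, the integral over `Ω` of an
integrable `f` equals that of its average `(f + f ∘ T + f ∘ T²) / 3`. The modes are eigenfunctions
of `T` with eigenvalues `τ` and `τ̄`, so in the average of `conj(Φ₁) |U₀|² U₀` every monomial of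
nontrivial character is multiplied by `1 + τ + τ² = 0`, leaving
`|ψ₁|² ψ₁ |Φ₁|⁴ + 2 |ψ₂|² ψ₁ |Φ₁|² |Φ₂|²`. The second projection is the first one with the roles of
`Φ₁` and `Φ₂` exchanged (and `τ` replaced by `τ̄`); the parity relation and `−Ω = Ω` give
`∫_Ω |Φ₂|⁴ = β₁`.
-/

open Finset ComplexConjugate

theorem IsPrimitiveRoot.sq_add_self_add_one {ω : ℂ} (hω : IsPrimitiveRoot ω 3) :
    ω ^ 2 + ω + 1 = 0 := by
  have h := hω.geom_sum_eq_zero (by norm_num)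
  simp only [sum_range_succ, sum_range_zero, pow_zero, pow_one, zero_add] at h
  linear_combination h

theorem IsPrimitiveRoot.conj_eq_sq {ω : ℂ} (hω : IsPrimitiveRoot ω 3) : conj ω = ω ^ 2 := by
  rw [← Complex.inv_eq_conj (hω.norm'_eq_one (by norm_num))]
  exact inv_eq_of_mul_eq_one_right (by rw [← pow_succ', hω.pow_eq_one])

theorem IsPrimitiveRoot.conj {ω : ℂ} {n : ℕ} (hω : IsPrimitiveRoot ω n) :
    IsPrimitiveRoot (conj ω) n :=
  hω.map_of_injective (starRingEnd ℂ).injective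

theorem sum_range_three_conj_mul_sq_norm_mul {ω : ℂ} (hω : IsPrimitiveRoot ω 3) (a b p q : ℂ) :
    ∑ k ∈ range 3, conj (ω ^ k * p) * ((‖a * (ω ^ k * p) + b * (conj ω ^ k * q)‖ ^ 2 : ℝ) : ℂ) *
        (a * (ω ^ k * p) + b * (conj ω ^ k * q))
      = 3 * (((‖a‖ ^ 2 * ‖p‖ ^ 4 + 2 * ‖b‖ ^ 2 * (‖p‖ ^ 2 * ‖q‖ ^ 2) : ℝ) : ℂ) * a) := by
  have hω₁ := hω.sq_add_self_add_one
  have hsq (z : ℂ) : ((‖z‖ ^ 2 : ℝ) : ℂ) = z * conj z := by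
    rw [Complex.mul_conj', Complex.ofReal_pow]
  have hpow4 (z : ℂ) : ((‖z‖ ^ 4 : ℝ) : ℂ) = (z * conj z) ^ 2 := by
    rw [← hsq, ← Complex.ofReal_pow, ← pow_mul]
  simp only [sum_range_succ, sum_range_zero, Complex.ofReal_add, Complex.ofReal_mul,
    Complex.ofReal_ofNat, hsq, hpow4, map_add, map_mul, map_pow, hω.conj_eq_sq]
  grind

theorem norm_conj_mul_sq_norm_mul_le (a b p q : ℂ) :
    ‖conj p * ((‖a * p + b * q‖ ^ 2 : ℝ) : ℂ) * (a * p + b * q)‖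
      ≤ (‖a‖ + ‖b‖) ^ 3 * (‖p‖ ^ 4 + ‖q‖ ^ 4) := by
  set m := max ‖p‖ ‖q‖
  have hp : ‖p‖ ≤ m := le_max_left _ _
  have hq : ‖q‖ ≤ m := le_max_right _ _
  have hU : ‖a * p + b * q‖ ≤ (‖a‖ + ‖b‖) * m :=
    calc ‖a * p + b * q‖ ≤ ‖a‖ * ‖p‖ + ‖b‖ * ‖q‖ := by
          simpa only [norm_mul] using norm_add_le (a * p) (b * q)
      _ ≤ (‖a‖ + ‖b‖) * m := by nlinarith [norm_nonneg a, norm_nonneg b]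
  have hm : m ^ 4 ≤ ‖p‖ ^ 4 + ‖q‖ ^ 4 := by
    obtain h | h : m = ‖p‖ ∨ m = ‖q‖ := max_choice _ _ <;> rw [h] <;>
      nlinarith [pow_nonneg (norm_nonneg p) 4, pow_nonneg (norm_nonneg q) 4]
  calc ‖conj p * ((‖a * p + b * q‖ ^ 2 : ℝ) : ℂ) * (a * p + b * q)‖
      = ‖p‖ * ‖a * p + b * q‖ ^ 3 := by
        rw [norm_mul, norm_mul, Complex.norm_conj, Complex.norm_real,
          Real.norm_of_nonneg (by positivity)]
        ring
    _ ≤ m * ((‖a‖ + ‖b‖) * m) ^ 3 := by gcongr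
    _ = (‖a‖ + ‖b‖) ^ 3 * m ^ 4 := by ring
    _ ≤ (‖a‖ + ‖b‖) ^ 3 * (‖p‖ ^ 4 + ‖q‖ ^ 4) := by gcongr

section InvariantSet

variable {α : Type*} [MeasurableSpace α] {μ : Measure α} {T : α → α} {s : Set α}

theorem MeasurableEmbedding.iterate (hT : MeasurableEmbedding T) (n : ℕ) :
    MeasurableEmbedding T^[n] := by
  induction n with
  | zero => exact MeasurableEmbedding.id
  | succ n ih => exact ih.comp hT

theorem setIntegral_comp_of_preimage_eq {E : Type*} [NormedAddCommGroup E] [NormedSpace ℝ E]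
    (hT : MeasurePreserving T μ μ) (hTe : MeasurableEmbedding T) (hTs : T ⁻¹' s = s)
    (f : α → E) : ∫ x in s, f (T x) ∂μ = ∫ x in s, f x ∂μ := by
  conv_lhs => rw [← hTs]
  exact hT.setIntegral_preimage_emb hTe f s

theorem setIntegral_sum_iterate {E : Type*} [NormedAddCommGroup E] [NormedSpace ℝ E]
    (hT : MeasurePreserving T μ μ) (hTe : MeasurableEmbedding T) (hTs : T ⁻¹' s = s)
    {f : α → E} (hf : IntegrableOn f s μ) (n : ℕ) :
    ∫ x in s, ∑ k ∈ range n, f (T^[k] x) ∂μ = n • ∫ x in s, f x ∂μ := by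
  have hTks (k : ℕ) : T^[k] ⁻¹' s = s := by
    rw [Set.preimage_iterate_eq]
    exact Function.iterate_fixed hTs k
  have hfk (k : ℕ) : IntegrableOn (fun x => f (T^[k] x)) s μ := by
    have := ((hT.iterate k).integrableOn_comp_preimage (hTe.iterate k)).2 hf
    rwa [hTks] at this
  rw [integral_finsetSum _ fun k _ => hfk k, sum_congr rfl fun k _ =>
    setIntegral_comp_of_preimage_eq (hT.iterate k) (hTe.iterate k) (hTks k) f, sum_const,
    card_range]

theorem ae_comp_iterate_eq_pow_mul {M : Type*} [Monoid M]
    (hT : Measure.QuasiMeasurePreserving T μ μ) {f : α → M} {c : M}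
    (hf : ∀ᵐ x ∂μ, f (T x) = c * f x) (k : ℕ) :
    ∀ᵐ x ∂μ, f (T^[k] x) = c ^ k * f x := by
  induction k with
  | zero => simp
  | succ k ih =>
    filter_upwards [hT.iterate k |>.ae hf, ih] with x hTk hk
    rw [Function.iterate_succ_apply', hTk, hk, pow_succ', mul_assoc]

theorem setIntegral_conj_mul_sq_norm_mul_eq (hT : MeasurePreserving T μ μ)
    (hTe : MeasurableEmbedding T) (hTs : T ⁻¹' s = s) {ω : ℂ} (hω : IsPrimitiveRoot ω 3)
    {Φ Ψ : α → ℂ} (hΦ : AEStronglyMeasurable Φ μ) (hΨ : AEStronglyMeasurable Ψ μ)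
    (hΦ4 : IntegrableOn (fun x => ‖Φ x‖ ^ 4) s μ) (hΨ4 : IntegrableOn (fun x => ‖Ψ x‖ ^ 4) s μ)
    (hΦT : ∀ᵐ x ∂μ, Φ (T x) = ω * Φ x) (hΨT : ∀ᵐ x ∂μ, Ψ (T x) = conj ω * Ψ x) (a b : ℂ) :
    ∫ x in s, conj (Φ x) * ((‖a * Φ x + b * Ψ x‖ ^ 2 : ℝ) : ℂ) * (a * Φ x + b * Ψ x) ∂μ
      = ((‖a‖ ^ 2 * ∫ x in s, ‖Φ x‖ ^ 4 ∂μ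
          + 2 * ‖b‖ ^ 2 * ∫ x in s, ‖Φ x‖ ^ 2 * ‖Ψ x‖ ^ 2 ∂μ : ℝ) : ℂ) * a := by
  set F := fun x => conj (Φ x) * ((‖a * Φ x + b * Ψ x‖ ^ 2 : ℝ) : ℂ) * (a * Φ x + b * Ψ x)
  set g := fun x => ‖a‖ ^ 2 * ‖Φ x‖ ^ 4 + 2 * ‖b‖ ^ 2 * (‖Φ x‖ ^ 2 * ‖Ψ x‖ ^ 2)
  have hF : IntegrableOn F s μ :=
    ((hΦ4.add hΨ4).const_mul ((‖a‖ + ‖b‖) ^ 3)).mono' (by fun_prop)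
      (ae_of_all _ fun x => norm_conj_mul_sq_norm_mul_le a b (Φ x) (Ψ x))
  have hΦΨ : IntegrableOn (fun x => ‖Φ x‖ ^ 2 * ‖Ψ x‖ ^ 2) s μ :=
    (hΦ4.add hΨ4).mono' (by fun_prop) (ae_of_all _ fun x => by
      rw [Real.norm_of_nonneg (by positivity)]
      change _ ≤ ‖Φ x‖ ^ 4 + ‖Ψ x‖ ^ 4
      nlinarith [sq_nonneg (‖Φ x‖ ^ 2 - ‖Ψ x‖ ^ 2), pow_nonneg (norm_nonneg (Φ x)) 4,
        pow_nonneg (norm_nonneg (Ψ x)) 4])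
  have hsum : ∀ᵐ x ∂μ, ∑ k ∈ range 3, F (T^[k] x) = 3 * ((g x : ℂ) * a) := by
    filter_upwards [ae_all_iff.2 (ae_comp_iterate_eq_pow_mul hT.quasiMeasurePreserving hΦT),
      ae_all_iff.2 (ae_comp_iterate_eq_pow_mul hT.quasiMeasurePreserving hΨT)] with x hΦx hΨx
    simp only [F, hΦx, hΨx]
    exact sum_range_three_conj_mul_sq_norm_mul hω a b (Φ x) (Ψ x)
  have h3 : (3 : ℂ) * ∫ x in s, F x ∂μ = 3 * ∫ x in s, (g x : ℂ) * a ∂μ :=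
    calc (3 : ℂ) * ∫ x in s, F x ∂μ = ∫ x in s, ∑ k ∈ range 3, F (T^[k] x) ∂μ := by
          rw [setIntegral_sum_iterate hT hTe hTs hF 3, nsmul_eq_mul, Nat.cast_ofNat]
      _ = ∫ x in s, 3 * ((g x : ℂ) * a) ∂μ := integral_congr_ae (ae_restrict_of_ae hsum)
      _ = 3 * ∫ x in s, (g x : ℂ) * a ∂μ := integral_const_mul _ _
  rw [mul_right_inj' three_ne_zero, integral_mul_const, integral_complex_ofReal] at h3
  rw [h3, integral_add (hΦ4.const_mul _) (hΦΨ.const_mul _), integral_const_mul, integral_const_mul]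

end InvariantSet

theorem rotR_rotT (x : EuclideanSpace ℝ (Fin 2)) : rotR (rotT x) = x := by
  have h3 : Real.sqrt 3 ^ 2 = 3 := Real.sq_sqrt (by norm_num)
  ext i
  fin_cases i <;> simp [rotR, rotT] <;> grind

theorem rotT_rotR (x : EuclideanSpace ℝ (Fin 2)) : rotT (rotR x) = x := by
  have h3 : Real.sqrt 3 ^ 2 = 3 := Real.sq_sqrt (by norm_num)
  ext i
  fin_cases i <;> simp [rotR, rotT] <;> grind

noncomputable def rotTLinearIsometryEquiv :
    EuclideanSpace ℝ (Fin 2) ≃ₗᵢ[ℝ] EuclideanSpace ℝ (Fin 2) where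
  toFun := rotT
  invFun := rotR
  map_add' x y := by
    ext i
    fin_cases i <;> simp [rotT] <;> ring
  map_smul' c x := by
    ext i
    fin_cases i <;> simp [rotT] <;> ring
  left_inv := rotR_rotT
  right_inv := rotT_rotR
  norm_map' x := by
    have h3 : Real.sqrt 3 ^ 2 = 3 := Real.sq_sqrt (by norm_num)
    change ‖rotT x‖ = ‖x‖
    simp only [EuclideanSpace.norm_eq, Fin.sum_univ_two, Real.norm_eq_abs, sq_abs]
    simp [rotT]
    grind

theorem rotT_measurePreserving : MeasurePreserving rotT :=
  rotTLinearIsometryEquiv.measurePreserving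

theorem rotT_measurableEmbedding : MeasurableEmbedding rotT :=
  rotTLinearIsometryEquiv.toMeasurableEquiv.measurableEmbedding

theorem preimage_rotT_eq_of_image_rotR {Ω : Set (EuclideanSpace ℝ (Fin 2))}
    (h : rotR '' Ω = Ω) : rotT ⁻¹' Ω = Ω :=
  (rotTLinearIsometryEquiv.symm.image_eq_preimage_symm Ω).symm.trans h

theorem effective_cubic_nonlinearity_general
    (Ω : Set (EuclideanSpace ℝ (Fin 2)))
    (hΩrot : rotR '' Ω = Ω)
    (hΩsymm : (fun x : EuclideanSpace ℝ (Fin 2) => -x) '' Ω = Ω)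
    (Φ₁ Φ₂ : EuclideanSpace ℝ (Fin 2) → ℂ)
    (hΦ₁ : Measurable Φ₁) (hΦ₂ : Measurable Φ₂)
    (hΦ₁L4 : IntegrableOn (fun x => ‖Φ₁ x‖ ^ 4) Ω volume)
    (hΦ₂L4 : IntegrableOn (fun x => ‖Φ₂ x‖ ^ 4) Ω volume)
    (hrot₁ : ∀ᵐ x ∂(volume : Measure (EuclideanSpace ℝ (Fin 2))),
      Φ₁ (rotT x) = Complex.exp (2 * Real.pi * Complex.I / 3) * Φ₁ x)
    (hrot₂ : ∀ᵐ x ∂(volume : Measure (EuclideanSpace ℝ (Fin 2))),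
      Φ₂ (rotT x) = (starRingEnd ℂ) (Complex.exp (2 * Real.pi * Complex.I / 3)) * Φ₂ x)
    (hparity : ∀ᵐ x ∂(volume : Measure (EuclideanSpace ℝ (Fin 2))),
      Φ₂ x = (starRingEnd ℂ) (Φ₁ (-x)))
    (β₁ β₂ : ℝ)
    (hβ₁ : β₁ = ∫ x in Ω, ‖Φ₁ x‖ ^ 4)
    (hβ₂ : β₂ = ∫ x in Ω, ‖Φ₁ x‖ ^ 2 * ‖Φ₂ x‖ ^ 2) :
    ∀ ψ₁ ψ₂ : ℂ, ∀ U₀ : EuclideanSpace ℝ (Fin 2) → ℂ,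
      U₀ = (fun x => ψ₁ * Φ₁ x + ψ₂ * Φ₂ x) →
      (∫ x in Ω, (starRingEnd ℂ) (Φ₁ x) * (‖U₀ x‖ ^ 2 : ℝ) * U₀ x
          = ((β₁ * ‖ψ₁‖ ^ 2 + 2 * β₂ * ‖ψ₂‖ ^ 2 : ℝ) : ℂ) * ψ₁) ∧
      (∫ x in Ω, (starRingEnd ℂ) (Φ₂ x) * (‖U₀ x‖ ^ 2 : ℝ) * U₀ x
          = ((2 * β₂ * ‖ψ₁‖ ^ 2 + β₁ * ‖ψ₂‖ ^ 2 : ℝ) : ℂ) * ψ₂) := by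
  rintro ψ₁ ψ₂ U₀ rfl
  beta_reduce
  have hτ : IsPrimitiveRoot (Complex.exp (2 * Real.pi * Complex.I / 3)) 3 := by
    simpa using Complex.isPrimitiveRoot_exp 3 (by norm_num)
  have hΩneg : Neg.neg ⁻¹' Ω = Ω := by rwa [Set.image_neg_eq_neg] at hΩsymm
  have hΦ₂β₁ : ∫ x in Ω, ‖Φ₂ x‖ ^ 4 = β₁ := by
    rw [hβ₁, ← setIntegral_comp_of_preimage_eq (Measure.measurePreserving_neg volume)
      (MeasurableEquiv.neg _).measurableEmbedding hΩneg fun x => ‖Φ₁ x‖ ^ 4]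
    exact integral_congr_ae (ae_restrict_of_ae (hparity.mono fun x hx => by
      simp only [hx, Complex.norm_conj]))
  have hΦ₂β₂ : ∫ x in Ω, ‖Φ₂ x‖ ^ 2 * ‖Φ₁ x‖ ^ 2 = β₂ := by simp_rw [hβ₂, mul_comm]
  have key {ω : ℂ} := setIntegral_conj_mul_sq_norm_mul_eq (ω := ω) rotT_measurePreserving
    rotT_measurableEmbedding (preimage_rotT_eq_of_image_rotR hΩrot)
  constructor
  · rw [key hτ hΦ₁.aestronglyMeasurable hΦ₂.aestronglyMeasurable hΦ₁L4 hΦ₂L4 hrot₁ hrot₂,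
      ← hβ₁, ← hβ₂]
    push_cast
    ring
  · simp_rw [add_comm (ψ₁ * Φ₁ _)]
    rw [key hτ.conj hΦ₂.aestronglyMeasurable hΦ₁.aestronglyMeasurable hΦ₂L4 hΦ₁L4 hrot₂
      (by simpa using hrot₁), hΦ₂β₁, hΦ₂β₂]
    push_cast
    ring

/-- for `Ω ⊆ ℝ²` invariant under the rotation `R` and under `x ↦ −x`, and Bloch
modes `Φ₁, Φ₂ ∈ L⁴(Ω)` satisfying `Φ₁(Rᵀx) = τΦ₁(x)`, `Φ₂(Rᵀx) = τ̄Φ₂(x)` (with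
`τ = e^{2πi/3}`) and `Φ₂(x) = conj(Φ₁(−x))` a.e., setting `β₁ := ∫_Ω |Φ₁|⁴` and
`β₂ := ∫_Ω |Φ₁|²|Φ₂|²`, for all `ψ₁, ψ₂ ∈ ℂ` and `U₀ := ψ₁Φ₁ + ψ₂Φ₂` one has
`∫_Ω conj(Φ₁)|U₀|²U₀ = (β₁|ψ₁|² + 2β₂|ψ₂|²)ψ₁` and
`∫_Ω conj(Φ₂)|U₀|²U₀ = (2β₂|ψ₁|² + β₁|ψ₂|²)ψ₂`. -/
theorem effective_cubic_nonlinearity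
    (Ω : Set (EuclideanSpace ℝ (Fin 2))) (hΩ : MeasurableSet Ω)
    (hΩrot : rotR '' Ω = Ω)
    (hΩsymm : (fun x : EuclideanSpace ℝ (Fin 2) => -x) '' Ω = Ω)
    (Φ₁ Φ₂ : EuclideanSpace ℝ (Fin 2) → ℂ)
    (hΦ₁ : Measurable Φ₁) (hΦ₂ : Measurable Φ₂)
    (hΦ₁L4 : IntegrableOn (fun x => ‖Φ₁ x‖ ^ 4) Ω volume)
    (hΦ₂L4 : IntegrableOn (fun x => ‖Φ₂ x‖ ^ 4) Ω volume)
    (hrot₁ : ∀ᵐ x ∂(volume : Measure (EuclideanSpace ℝ (Fin 2))),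
      Φ₁ (rotT x) = Complex.exp (2 * Real.pi * Complex.I / 3) * Φ₁ x)
    (hrot₂ : ∀ᵐ x ∂(volume : Measure (EuclideanSpace ℝ (Fin 2))),
      Φ₂ (rotT x) = (starRingEnd ℂ) (Complex.exp (2 * Real.pi * Complex.I / 3)) * Φ₂ x)
    (hparity : ∀ᵐ x ∂(volume : Measure (EuclideanSpace ℝ (Fin 2))),
      Φ₂ x = (starRingEnd ℂ) (Φ₁ (-x)))
    (β₁ β₂ : ℝ)
    (hβ₁ : β₁ = ∫ x in Ω, ‖Φ₁ x‖ ^ 4)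
    (hβ₂ : β₂ = ∫ x in Ω, ‖Φ₁ x‖ ^ 2 * ‖Φ₂ x‖ ^ 2) :
    ∀ ψ₁ ψ₂ : ℂ, ∀ U₀ : EuclideanSpace ℝ (Fin 2) → ℂ,
      U₀ = (fun x => ψ₁ * Φ₁ x + ψ₂ * Φ₂ x) →
      (∫ x in Ω, (starRingEnd ℂ) (Φ₁ x) * (‖U₀ x‖ ^ 2 : ℝ) * U₀ x
          = ((β₁ * ‖ψ₁‖ ^ 2 + 2 * β₂ * ‖ψ₂‖ ^ 2 : ℝ) : ℂ) * ψ₁) ∧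
      (∫ x in Ω, (starRingEnd ℂ) (Φ₂ x) * (‖U₀ x‖ ^ 2 : ℝ) * U₀ x
          = ((2 * β₂ * ‖ψ₁‖ ^ 2 + β₁ * ‖ψ₂‖ ^ 2 : ℝ) : ℂ) * ψ₂) :=
  effective_cubic_nonlinearity_general Ω hΩrot hΩsymm Φ₁ Φ₂ hΦ₁ hΦ₂ hΦ₁L4 hΦ₂L4 hrot₁ hrot₂ hparity
    β₁ β₂ hβ₁ hβ₂
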